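/- Define x, y, z ∈ Equiv.Perm (ZMod 2)⟦X⟧ by x = B⁻¹ ∘ A, y = C⁻¹ ∘ A, z = D⁻¹ ∘ A (so x(h) = B⁻¹(A(h)), etc.). Then x is the translation h ↦ h + X·(1+X+X²)⁻¹, y is the translation h ↦ h + (1+X+X²)⁻¹, z is the translation h ↦ h + (1+X)·(1+X+X²)⁻¹; moreover y = x ∘ z = z ∘ x, x² = z² = 1, and the subgroup of Equiv.Perm (ZMod 2)⟦X⟧ generated by x and z is isomorphic to the Klein four-group ZMod 2 × ZMod 2. -/

import Mathlib

/-!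
The maps `A`, `B`, `C`, `D` share the linear part `h ↦ h·f`, so `B⁻¹A`, `C⁻¹A`, `D⁻¹A` are
translations, by the vectors `t` with `g_a = t·f + g`. In characteristic two `(1+X)² = 1+X²`, so
`f = (1+X+X²)·(1+X)⁻²`, and solving for `t` gives the three stated vectors. Translations of `R`
form a copy of its additive group, an `𝔽₂`-vector space; the vectors of `x` and `z` are linearly
independent over `𝔽₂`, hence generate a Klein four-group, and their sum is the vector of `y`.
-/

open PowerSeries

noncomputable section

/-- The ring of formal power series over the field with two elements. -/
abbrev R : Type := PowerSeries (ZMod 2)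

/-- The multiplier `f = (1+X+X²)·(1+X²)⁻¹`. -/
def f : R := (1 + X + X ^ 2) * (1 + X ^ 2)⁻¹

/-- `g_a = ((1+X)⁻¹)³`. -/
def ga : R := ((1 + X)⁻¹) ^ 3

/-- `g_b = (1+X+X²)·((1+X)⁻¹)³`. -/
def gb : R := (1 + X + X ^ 2) * ((1 + X)⁻¹) ^ 3

/-- `g_c = X·((1+X)⁻¹)³`. -/
def gc : R := X * ((1 + X)⁻¹) ^ 3

/-- `g_d = X²·((1+X)⁻¹)³`. -/
def gd : R := X ^ 2 * ((1 + X)⁻¹) ^ 3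

lemma constantCoeff_f_ne_zero : constantCoeff (R := ZMod 2) f ≠ 0 := by
  simp [f, map_mul, map_add, map_pow, PowerSeries.constantCoeff_inv]

/-- `f` as a unit of `R`. -/
def fU : Rˣ := Units.mkOfMulEqOne f f⁻¹ (PowerSeries.mul_inv_cancel f constantCoeff_f_ne_zero)

/-- The affine bijection `h ↦ h·u + g` for a unit `u` and `g : R`. -/
def affine (u : Rˣ) (g : R) : Equiv.Perm R := (Units.mulRight u).trans (Equiv.addRight g)

@[simp] lemma affine_apply (u : Rˣ) (g h : R) : affine u g h = h * u + g := rfl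

/-- The affine bijection `A : h ↦ h·f + g_a`. -/
def A : Equiv.Perm R := affine fU ga

/-- The affine bijection `B : h ↦ h·f + g_b`. -/
def B : Equiv.Perm R := affine fU gb

/-- The affine bijection `C : h ↦ h·f + g_c`. -/
def C : Equiv.Perm R := affine fU gc

/-- The affine bijection `D : h ↦ h·f + g_d`. -/
def D : Equiv.Perm R := affine fU gd

end
noncomputable section

/-- `x = B⁻¹ ∘ A` (so `x h = B⁻¹ (A h)`). -/
def x : Equiv.Perm R := B⁻¹ * A

/-- `y = C⁻¹ ∘ A` (so `y h = C⁻¹ (A h)`). -/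
def y : Equiv.Perm R := _root_.C⁻¹ * A

/-- `z = D⁻¹ ∘ A` (so `z h = D⁻¹ (A h)`). -/
def z : Equiv.Perm R := D⁻¹ * A

instance PowerSeries.charP {S : Type*} [Semiring S] (p : ℕ) [CharP S p] : CharP S⟦X⟧ p :=
  charP_of_injective_ringHom C_injective p

namespace Equiv

variable (G : Type*) [AddCommGroup G]

def addRightHom : Multiplicative G →* Perm G where
  toFun a := Equiv.addRight a.toAdd
  map_one' := addRight_zero
  map_mul' a b := by rw [toAdd_mul, add_comm, addRight_add]

variable {G}

@[simp]
lemma addRightHom_apply (a : Multiplicative G) : addRightHom G a = Equiv.addRight a.toAdd := rfl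

lemma addRightHom_injective : Function.Injective (addRightHom G) := fun a b hab => by
  simpa using congrArg (· 0) hab

theorem nonempty_closure_addRight_pair_mulEquiv {n : ℕ} [NeZero n] [Module (ZMod n) G] {v w : G}
    (hvw : LinearIndependent (ZMod n) ![v, w]) :
    Nonempty (Subgroup.closure {Equiv.addRight v, Equiv.addRight w} ≃*
      Multiplicative (ZMod n × ZMod n)) := by
  let L : ZMod n × ZMod n →ₗ[ZMod n] G :=
    (LinearMap.fst _ _ _).smulRight v + (LinearMap.snd _ _ _).smulRight w
  let φ := (addRightHom G).comp (AddMonoidHom.toMultiplicative L.toAddMonoidHom)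
  have hL : Function.Injective L := by
    rw [← LinearMap.ker_eq_bot, LinearMap.ker_eq_bot']
    intro p hp
    obtain ⟨h1, h2⟩ := LinearIndependent.pair_iff.mp hvw p.1 p.2 hp
    exact Prod.ext h1 h2
  have hφ : Function.Injective φ := addRightHom_injective.comp hL
  have hφ₁ : φ (.ofAdd (1, 0)) = Equiv.addRight v := by simp [φ, L]
  have hφ₂ : φ (.ofAdd (0, 1)) = Equiv.addRight w := by simp [φ, L]
  have hrange : φ.range = Subgroup.closure {Equiv.addRight v, Equiv.addRight w} := by
    apply le_antisymm
    · rintro _ ⟨p, rfl⟩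
      have hp : p = .ofAdd (1, 0) ^ p.toAdd.1.val * .ofAdd (0, 1) ^ p.toAdd.2.val := by
        rw [← ofAdd_nsmul, ← ofAdd_nsmul, ← ofAdd_add]
        ext <;> simp
      rw [hp, map_mul, map_pow, map_pow, hφ₁, hφ₂]
      exact mul_mem (pow_mem (Subgroup.subset_closure (by simp)) _)
        (pow_mem (Subgroup.subset_closure (by simp)) _)
    · rw [Subgroup.closure_le]
      rintro _ (rfl | rfl)
      exacts [⟨_, hφ₁⟩, ⟨_, hφ₂⟩]
  exact ⟨(MulEquiv.subgroupCongr hrange.symm).trans (MonoidHom.ofInjective hφ).symm⟩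

end Equiv

lemma affine_inv_mul_affine_eq_addRight {u : Rˣ} {g g' t : R} (h : g' = t * u + g) :
    (affine u g)⁻¹ * affine u g' = Equiv.addRight t := by
  refine Equiv.ext fun k => ?_
  rw [Equiv.Perm.mul_apply, Equiv.Perm.inv_def, Equiv.symm_apply_eq, affine_apply, affine_apply,
    Equiv.coe_addRight, h]
  ring

lemma inv_one_add_X_sq : (1 + X ^ 2 : R)⁻¹ = (1 + X)⁻¹ ^ 2 := by
  have h : (1 + X ^ 2 : R) = (1 + X) ^ 2 := by rw [CharTwo.add_sq, one_pow]
  rw [h, sq, sq, PowerSeries.mul_inv_rev]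

lemma inv_one_add_X_add_X_sq_mul_f : (1 + X + X ^ 2 : R)⁻¹ * f = (1 + X)⁻¹ ^ 2 := by
  rw [f, inv_one_add_X_sq, ← mul_assoc, PowerSeries.inv_mul_cancel _ (by simp), one_mul]

lemma one_add_X_mul_inv : (1 + X : R) * (1 + X)⁻¹ = 1 :=
  PowerSeries.mul_inv_cancel _ (by simp)

lemma ga_eq_mul_f_add_gb : ga = X * (1 + X + X ^ 2)⁻¹ * f + gb := by
  rw [mul_assoc, inv_one_add_X_add_X_sq_mul_f, ga, gb]
  linear_combination (-(X : R) * (1 + X)⁻¹ ^ 2) * one_add_X_mul_inv -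
    (X * (1 + X)⁻¹ ^ 2) * CharTwo.two_eq_zero (R := R)

lemma ga_eq_mul_f_add_gc : ga = (1 + X + X ^ 2)⁻¹ * f + gc := by
  rw [inv_one_add_X_add_X_sq_mul_f, ga, gc]
  linear_combination ((1 + X)⁻¹ ^ 2 : R) * one_add_X_mul_inv -
    (X * (1 + X)⁻¹ ^ 3) * CharTwo.two_eq_zero (R := R)

lemma ga_eq_mul_f_add_gd : ga = (1 + X) * (1 + X + X ^ 2)⁻¹ * f + gd := by
  rw [mul_assoc, inv_one_add_X_add_X_sq_mul_f, ga, gd]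
  linear_combination ((1 - X : R) * (1 + X)⁻¹ ^ 2) * one_add_X_mul_inv -
    (X * (1 + X)⁻¹ ^ 2) * CharTwo.two_eq_zero (R := R)

lemma x_eq_addRight : x = Equiv.addRight (X * (1 + X + X ^ 2)⁻¹) :=
  affine_inv_mul_affine_eq_addRight ga_eq_mul_f_add_gb

lemma y_eq_addRight : y = Equiv.addRight (1 + X + X ^ 2)⁻¹ :=
  affine_inv_mul_affine_eq_addRight ga_eq_mul_f_add_gc

lemma z_eq_addRight : z = Equiv.addRight ((1 + X) * (1 + X + X ^ 2)⁻¹) :=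
  affine_inv_mul_affine_eq_addRight ga_eq_mul_f_add_gd

lemma inv_one_add_X_add_X_sq_eq_add : (1 + X + X ^ 2 : R)⁻¹ =
    (1 + X) * (1 + X + X ^ 2)⁻¹ + X * (1 + X + X ^ 2)⁻¹ := by
  linear_combination (-(X : R) * (1 + X + X ^ 2)⁻¹) * CharTwo.two_eq_zero (R := R)

lemma linearIndependent_X_mul_inv_one_add_X_mul_inv :
    LinearIndependent (ZMod 2) ![(X : R) * (1 + X + X ^ 2)⁻¹, (1 + X) * (1 + X + X ^ 2)⁻¹] := by
  have hs : (1 + X + X ^ 2 : R)⁻¹ ≠ 0 := by simp [PowerSeries.inv_eq_zero]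
  have hX : (1 + X : R) ≠ 0 := fun h => by simpa using congrArg constantCoeff h
  rw [LinearIndependent.pair_iff]
  have zero_or_one : ∀ c : ZMod 2, c = 0 ∨ c = 1 := by decide
  intro a b hab
  rcases zero_or_one a with rfl | rfl <;> rcases zero_or_one b with rfl | rfl
  · exact ⟨rfl, rfl⟩
  · rw [zero_smul, one_smul, zero_add] at hab
    exact absurd hab (mul_ne_zero hX hs)
  · rw [one_smul, zero_smul, add_zero] at hab
    exact absurd hab (mul_ne_zero X_ne_zero hs)
  · rw [one_smul, one_smul, add_comm, ← inv_one_add_X_add_X_sq_eq_add] at hab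
    exact absurd hab hs

/-- `x`, `y`, `z` are the translations by `X·(1+X+X²)⁻¹`, `(1+X+X²)⁻¹` and `(1+X)·(1+X+X²)⁻¹`
respectively; moreover `y = x ∘ z = z ∘ x`, `x² = z² = 1`, and `⟨x, z⟩` is isomorphic to the
Klein four-group `ZMod 2 × ZMod 2`. -/
theorem klein_subgroup :
    (∀ h : R, x h = h + X * (1 + X + X ^ 2)⁻¹) ∧
    (∀ h : R, y h = h + (1 + X + X ^ 2)⁻¹) ∧
    (∀ h : R, z h = h + (1 + X) * (1 + X + X ^ 2)⁻¹) ∧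
    y = x * z ∧ y = z * x ∧ x ^ 2 = 1 ∧ z ^ 2 = 1 ∧
    Nonempty ((Subgroup.closure ({x, z} : Set (Equiv.Perm R))) ≃*
      Multiplicative (ZMod 2 × ZMod 2)) := by
  refine ⟨fun h => by rw [x_eq_addRight]; rfl, fun h => by rw [y_eq_addRight]; rfl,
    fun h => by rw [z_eq_addRight]; rfl, ?_, ?_, ?_, ?_, ?_⟩
  · rw [y_eq_addRight, x_eq_addRight, z_eq_addRight, ← Equiv.addRight_add,
      ← inv_one_add_X_add_X_sq_eq_add]
  · rw [y_eq_addRight, x_eq_addRight, z_eq_addRight, ← Equiv.addRight_add,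
      add_comm (X * _ : R), ← inv_one_add_X_add_X_sq_eq_add]
  · rw [sq, x_eq_addRight, ← Equiv.addRight_add, CharTwo.add_self_eq_zero, Equiv.addRight_zero]
  · rw [sq, z_eq_addRight, ← Equiv.addRight_add, CharTwo.add_self_eq_zero, Equiv.addRight_zero]
  · rw [x_eq_addRight, z_eq_addRight]
    exact Equiv.nonempty_closure_addRight_pair_mulEquiv
      linearIndependent_X_mul_inv_one_add_X_mul_inv

end
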